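/- The monophonic convexity of a finite connected graph G that is not a complete graph has Carathéodory number 2: for every X ⊆ V(G) and v ∈ cl(X), there exists Y ⊆ X with |Y| ≤ 2 and v ∈ cl(Y). -/

import Mathlib

open Classical

variable {V : Type*}

namespace Paper

def mInterval (G : SimpleGraph V) (u v : V) : Set V :=
  {w | ∃ p : G.Walk u v, p.IsPath ∧ p.toSubgraph.IsInduced ∧ w ∈ p.support}

def MConvex (G : SimpleGraph V) (C : Set V) : Prop :=
  ∀ u ∈ C, ∀ v ∈ C, mInterval G u v ⊆ C

def mHull (G : SimpleGraph V) (X : Set V) : Set V :=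
  ⋂₀ {C | MConvex G C ∧ X ⊆ C}

def mIntervalSet (G : SimpleGraph V) (Z : Set V) : Set V :=
  ⋃ u ∈ Z, ⋃ v ∈ Z, mInterval G u v

def Sep (G : SimpleGraph V) (A B : Set V) : Prop :=
  ∃ H : Set V, MConvex G H ∧ MConvex G Hᶜ ∧ A ⊆ H ∧ B ⊆ Hᶜ

def nbhd (G : SimpleGraph V) (X : Set V) : Set V :=
  {v | v ∉ X ∧ ∃ x ∈ X, G.Adj x v}

def cnbhd (G : SimpleGraph V) (X : Set V) : Set V := X ∪ nbhd G X

def front (G : SimpleGraph V) (X Y : Set V) : Set V := X ∩ cnbhd G Y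

def IsClique (G : SimpleGraph V) (K : Set V) : Prop :=
  ∀ u ∈ K, ∀ v ∈ K, u ≠ v → G.Adj u v

def shadow (G : SimpleGraph V) (A B : Set V) : Set V :=
  {v | (mHull G (B ∪ {v}) ∩ A).Nonempty}

def Forbidden (G : SimpleGraph V) (A B X : Set V) : Prop :=
  X ⊆ (A ∪ B)ᶜ ∧ (mHull G X ∩ A).Nonempty ∧ (mHull G X ∩ B).Nonempty

def MFS (G : SimpleGraph V) (A B : Set V) : Set (Set V) :=
  {X | Forbidden G A B X ∧ ∀ Y, Y ⊂ X → ¬ Forbidden G A B Y}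

def presat (G : SimpleGraph V) (A B : Set V) : Set V :=
  mHull G (shadow G A B ∪ ⋃ X ∈ MFS G A B, ⋂ x ∈ X, mHull G (A ∪ {x}))

def Linked (G : SimpleGraph V) (A B : Set V) : Prop :=
  ∃ a ∈ A, ∃ b ∈ B, G.Adj a b

def Saturated (G : SimpleGraph V) (A B : Set V) : Prop :=
  A = presat G A B ∧ B = presat G B A

def IsCompOf (G : SimpleGraph V) (W S : Set V) : Prop :=
  S.Nonempty ∧ S ⊆ W ∧ (G.induce S).Connected ∧
    ∀ T, S ⊆ T → T ⊆ W → (G.induce T).Connected → T = S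

def Eqv (G : SimpleGraph V) (A B : Set V) (u v : V) : Prop :=
  u = v ∨ ∃ L : List (Set V), L ≠ [] ∧
    (∀ S ∈ L, IsCompOf G (cnbhd G (A ∪ B))ᶜ S) ∧
    List.Chain' (fun S T => (nbhd G S ∩ nbhd G T).Nonempty) L ∧
    (∃ S₀ ∈ L.head?, u ∈ cnbhd G S₀) ∧
    (∃ Sₖ ∈ L.getLast?, v ∈ cnbhd G Sₖ)

end Paper

open Paper

/-!
Strong induction on `|cl X|`. Let `Y ⊆ X` be minimal with `v ∈ cl Y`. A clique is convex, so
unless `v ∈ Y` there are non-adjacent `a, b ∈ Y`; pick `x ∈ Y \ {a, b}`. By minimality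
`C = cl (Y \ {x})` misses `v` and `x`. Let `S` be the component of `x` in `G - C` and `Q ⊆ C` its
neighbourhood. If `Z` is a set whose neighbourhood is a clique, a chordless path with both ends
outside `Z` cannot meet `Z`, since it would enter and leave `Z` through two non-consecutive
neighbours of `Z`. The neighbourhood of every component of `G - C` is a clique: an induced path
through the component between two non-adjacent neighbours would have an inner vertex outside the
convex set `C`. Hence `S ∪ Q` and `C ∪ cl ({x} ∪ Q)` are convex, so `v ∈ cl ({x} ∪ Q)`, which is
strictly smaller than `cl Y` because it misses `a` or `b`. By induction `v ∈ cl {α, β}` for some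
`α, β ∈ {x} ∪ Q`, not both in `Q ⊆ C`, and every `q ∈ Q` lies on an induced path from `x` to a
point of `Y \ {x}`.
-/

namespace SimpleGraph.Walk

variable {G : SimpleGraph V} {u v w x y : V}

lemma mk_mem_edges_of_length_eq_one (p : G.Walk u v) (h : p.length = 1) : s(u, v) ∈ p.edges := by
  cases p with
  | nil => simp at h
  | cons _ q => cases q with
    | nil => simp
    | cons => simp at h

lemma exists_isSubwalk_of_mem_support {p : G.Walk u v} (hx : x ∈ p.support)
    (hy : y ∈ p.support) :
    (∃ r : G.Walk x y, r.IsSubwalk p) ∨ ∃ r : G.Walk y x, r.IsSubwalk p := by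
  rw [← p.take_spec hx, mem_support_append_iff] at hy
  rcases hy with hy | hy
  · exact .inr ⟨_, (isSubwalk_dropUntil _ hy).trans (isSubwalk_takeUntil _ hx)⟩
  · exact .inl ⟨_, (isSubwalk_takeUntil _ hy).trans (isSubwalk_dropUntil _ hx)⟩

lemma IsSubwalk.exists_shorter_of_adj {p : G.Walk u v} {r : G.Walk x y} (hr : r.IsSubwalk p)
    (hxy : G.Adj x y) (hlen : 2 ≤ r.length) :
    ∃ q : G.Walk u v, q.length < p.length ∧ q.support ⊆ p.support := by
  obtain ⟨ru, rv, rfl⟩ := hr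
  refine ⟨ru.append (cons hxy rv), by simp only [length_append, length_cons]; omega, ?_⟩
  intro z hz
  simp only [mem_support_append_iff, support_cons, List.mem_cons] at hz ⊢
  rcases hz with hz | rfl | hz
  · exact .inl (.inl hz)
  · exact .inl (.inl ru.end_mem_support)
  · exact .inr hz

lemma IsSubwalk.two_le_length_of_adj {p : G.Walk u v} {r : G.Walk x y}
    (hr : r.IsSubwalk p) (hxy : G.Adj x y) (hnot : s(x, y) ∉ p.edges) : 2 ≤ r.length := by
  by_contra! h
  interval_cases hlen : r.length
  · exact hxy.ne (eq_of_length_eq_zero hlen)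
  · exact hnot (hr.edges_subset (r.mk_mem_edges_of_length_eq_one hlen))

lemma exists_shorter_of_not_isChordless {p : G.Walk u v} (h : ¬ p.IsChordless) :
    ∃ q : G.Walk u v, q.length < p.length ∧ q.support ⊆ p.support := by
  simp only [isChordless_iff_forall_mem_edges, not_forall] at h
  obtain ⟨x, y, hx, hy, hxy, hnot⟩ := h
  rcases exists_isSubwalk_of_mem_support hx hy with ⟨r, hr⟩ | ⟨r, hr⟩
  · exact hr.exists_shorter_of_adj hxy (hr.two_le_length_of_adj hxy hnot)
  · rw [Sym2.eq_swap] at hnot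
    exact hr.exists_shorter_of_adj hxy.symm (hr.two_le_length_of_adj hxy.symm hnot)

lemma exists_shorter_of_not_isPath {p : G.Walk u v} (h : ¬ p.IsPath) :
    ∃ q : G.Walk u v, q.length < p.length ∧ q.support ⊆ p.support := by
  refine ⟨p.bypass, (p.length_bypass_le_length).lt_of_ne fun heq => h ?_,
    p.support_bypass_subset_support⟩
  rw [← bypass_eq_self_of_length_le_length_bypass p heq.ge]
  exact p.bypass_isPath

theorem exists_isPath_isChordless_support_subset (p : G.Walk u v) :
    ∃ q : G.Walk u v, q.IsPath ∧ q.IsChordless ∧ q.support ⊆ p.support := by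
  induction hn : p.length using Nat.strong_induction_on generalizing p with
  | _ n ih =>
  by_cases hp : p.IsPath ∧ p.IsChordless
  · exact ⟨p, hp.1, hp.2, List.Subset.refl _⟩
  obtain ⟨q, hlt, hsub⟩ := (not_and_or.1 hp).elim exists_shorter_of_not_isPath
    exists_shorter_of_not_isChordless
  obtain ⟨r, hr, hrc, hrq⟩ := ih _ (hn ▸ hlt) q rfl
  exact ⟨r, hr, hrc, List.Subset.trans hrq hsub⟩

lemma IsPath.eq_of_mem_support_append {p : G.Walk u v} {q : G.Walk v w}
    (h : (p.append q).IsPath) (hp : x ∈ p.support) (hq : x ∈ q.support) : x = v := by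
  by_contra hxv
  exact h.ne_of_mem_support_of_append hxv hp hq rfl

lemma IsChordless.of_append_left {p : G.Walk u v} {q : G.Walk v w}
    (hpath : (p.append q).IsPath) (h : (p.append q).IsChordless) : p.IsChordless := by
  rw [isChordless_iff_forall_mem_edges] at h ⊢
  intro x y hx hy hxy
  have hsub := p.support_subset_support_append_left q
  have he := h (hsub hx) (hsub hy) hxy
  rw [edges_append, List.mem_append] at he
  refine he.resolve_right fun he => hxy.ne ?_
  rw [hpath.eq_of_mem_support_append hx (q.fst_mem_support_of_mem_edges he),
    hpath.eq_of_mem_support_append hy (q.snd_mem_support_of_mem_edges he)]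

lemma IsChordless.of_append_right {p : G.Walk u v} {q : G.Walk v w}
    (hpath : (p.append q).IsPath) (h : (p.append q).IsChordless) : q.IsChordless := by
  rw [isChordless_iff_forall_mem_edges] at h ⊢
  intro x y hx hy hxy
  have hsub := p.support_subset_support_append_right q
  have he := h (hsub hx) (hsub hy) hxy
  rw [edges_append, List.mem_append] at he
  refine he.resolve_left fun he => hxy.ne ?_
  rw [hpath.eq_of_mem_support_append (p.fst_mem_support_of_mem_edges he) hx,
    hpath.eq_of_mem_support_append (p.snd_mem_support_of_mem_edges he) hy]

lemma IsChordless.not_adj_of_append {p : G.Walk u v} {q : G.Walk v w}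
    (hpath : (p.append q).IsPath) (h : (p.append q).IsChordless) (hx : x ∈ p.support)
    (hy : y ∈ q.support) (hxv : x ≠ v) (hyv : y ≠ v) : ¬ G.Adj x y := by
  intro hxy
  have he := h.mem_edges (support_subset_support_append_left p q hx)
    (support_subset_support_append_right p q hy) hxy
  rw [edges_append, List.mem_append] at he
  rcases he with he | he
  · exact hyv (hpath.eq_of_mem_support_append (p.snd_mem_support_of_mem_edges he) hy)
  · exact hxv (hpath.eq_of_mem_support_append hx (q.fst_mem_support_of_mem_edges he))

end SimpleGraph.Walk

namespace Paper

open SimpleGraph Walk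

variable {G : SimpleGraph V} {C D X Y Z : Set V} {t u v w x : V}

lemma mem_mInterval_iff :
    w ∈ mInterval G u v ↔ ∃ p : G.Walk u v, p.IsPath ∧ p.IsChordless ∧ w ∈ p.support := by
  simp only [mInterval, isInduced_toSubgraph, Set.mem_ofPred_eq]

lemma mInterval_comm (u v : V) : mInterval G u v = mInterval G v u := by
  ext w
  simp only [mem_mInterval_iff]
  constructor <;> rintro ⟨p, hp, hc, hw⟩ <;>
    exact ⟨p.reverse, hp.reverse, by rwa [← isInduced_toSubgraph, toSubgraph_reverse,
      isInduced_toSubgraph], by rwa [support_reverse, List.mem_reverse]⟩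

lemma mInterval_self_subset (u : V) : mInterval G u u ⊆ {u} := by
  intro w hw
  obtain ⟨p, hp, -, hw⟩ := mem_mInterval_iff.1 hw
  rw [nil_iff_support_eq.1 (isPath_iff_nil.1 hp)] at hw
  simpa using hw

lemma mInterval_subset_of_adj (huv : G.Adj u v) : mInterval G u v ⊆ {u, v} := by
  intro w hw
  obtain ⟨p, hp, hc, hw⟩ := mem_mInterval_iff.1 hw
  rw [hp.eq_adj_toWalk_of_mem_edges (hc.mem_edges p.start_mem_support p.end_mem_support huv)]
    at hw
  simpa using hw

lemma mConvex_of_isClique (hK : G.IsClique X) : MConvex G X := by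
  intro u hu v hv w hw
  obtain rfl | huv := eq_or_ne u v
  · rwa [mInterval_self_subset u hw]
  · rcases mInterval_subset_of_adj (hK hu hv huv) hw with rfl | rfl
    exacts [hu, hv]

lemma MConvex.union (hC : MConvex G C) (hD : MConvex G D)
    (h : ∀ u ∈ C, ∀ v ∈ D, mInterval G u v ⊆ C ∪ D) : MConvex G (C ∪ D) := by
  rintro u (hu | hu) v (hv | hv)
  · exact (hC u hu v hv).trans Set.subset_union_left
  · exact h u hu v hv
  · exact mInterval_comm u v ▸ h v hv u hu
  · exact (hD u hu v hv).trans Set.subset_union_right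

lemma mConvex_mHull (G : SimpleGraph V) (X : Set V) : MConvex G (mHull G X) :=
  fun _ hu _ hv _ hw C hC => hC.1 _ (hu C hC) _ (hv C hC) hw

lemma subset_mHull (G : SimpleGraph V) (X : Set V) : X ⊆ mHull G X :=
  fun _ hx _ hC => hC.2 hx

lemma mHull_subset (hXC : X ⊆ C) (hC : MConvex G C) : mHull G X ⊆ C :=
  fun _ hx => hx C ⟨hC, hXC⟩

lemma mHull_subset_mHull (h : X ⊆ mHull G Y) : mHull G X ⊆ mHull G Y :=
  mHull_subset h (mConvex_mHull G Y)

lemma mHull_mono (h : X ⊆ Y) : mHull G X ⊆ mHull G Y :=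
  mHull_subset_mHull (h.trans (subset_mHull G Y))

lemma MConvex.support_subset (hC : MConvex G C) {p : G.Walk u v} (hp : p.IsPath)
    (hc : p.IsChordless) (hu : u ∈ C) (hv : v ∈ C) : ∀ t ∈ p.support, t ∈ C :=
  fun _ ht => hC u hu v hv (mem_mInterval_iff.2 ⟨p, hp, hc, ht⟩)

lemma notMem_of_isClique_nbhd {p : G.Walk u v} (hp : p.IsPath) (hc : p.IsChordless)
    (hu : u ∉ Z) (hv : v ∉ Z) (hZ : G.IsClique (nbhd G Z ∩ {x | x ∈ p.support}))
    (ht : t ∈ p.support) : t ∉ Z := by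
  intro htZ
  rw [← p.take_spec ht] at hp hc
  obtain ⟨d₁, hd₁, hd₁Z, hd₁Z'⟩ :=
    (p.takeUntil t ht).exists_boundary_dart Zᶜ hu (Set.not_notMem.2 htZ)
  obtain ⟨d₂, hd₂, hd₂Z, hd₂Z'⟩ := (p.dropUntil t ht).exists_boundary_dart Z htZ hv
  have hb₁ := (p.takeUntil t ht).dart_fst_mem_support_of_mem_darts hd₁
  have hb₂ := (p.dropUntil t ht).dart_snd_mem_support_of_mem_darts hd₂
  have hb₁t : d₁.fst ≠ t := fun h => hd₁Z (h ▸ htZ)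
  have hb₂t : d₂.snd ≠ t := fun h => hd₂Z' (h ▸ htZ)
  refine hc.not_adj_of_append hp hb₁ hb₂ hb₁t hb₂t
    (hZ ?_ ?_ (hp.ne_of_mem_support_of_append hb₂t hb₁ hb₂))
  · exact ⟨⟨hd₁Z, _, Set.not_notMem.1 hd₁Z', d₁.adj.symm⟩,
      p.support_takeUntil_subset_support ht hb₁⟩
  · exact ⟨⟨hd₂Z', _, hd₂Z, d₂.adj⟩, p.support_dropUntil_subset_support ht hb₂⟩

def componentIn (G : SimpleGraph V) (D : Set V) (t : V) : Set V :=
  {z | ∃ p : G.Walk t z, ∀ x ∈ p.support, x ∈ D}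

lemma mem_componentIn_self (ht : t ∈ D) : t ∈ componentIn G D t :=
  ⟨nil, by simpa⟩

lemma componentIn_subset : componentIn G D t ⊆ D :=
  fun z ⟨p, hp⟩ => hp z p.end_mem_support

lemma mem_componentIn_of_mem_support {p : G.Walk t u} (hp : ∀ x ∈ p.support, x ∈ D)
    (hx : x ∈ p.support) : x ∈ componentIn G D t :=
  ⟨p.takeUntil x hx, fun y hy => hp y (p.support_takeUntil_subset_support hx hy)⟩

lemma mem_componentIn_comm (h : u ∈ componentIn G D t) : t ∈ componentIn G D u := by
  obtain ⟨p, hp⟩ := h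
  exact ⟨p.reverse, fun x hx => hp x (by rwa [support_reverse, List.mem_reverse] at hx)⟩

lemma mem_componentIn_trans (htu : u ∈ componentIn G D t) (huw : w ∈ componentIn G D u) :
    w ∈ componentIn G D t := by
  obtain ⟨p, hp⟩ := htu
  obtain ⟨q, hq⟩ := huw
  refine ⟨p.append q, fun x hx => ?_⟩
  rcases (mem_support_append_iff p q).1 hx with hx | hx
  exacts [hp x hx, hq x hx]

lemma exists_walk_of_mem_componentIn (hu : u ∈ componentIn G D t) (hw : w ∈ componentIn G D t) :
    ∃ p : G.Walk u w, ∀ x ∈ p.support, x ∈ componentIn G D t := by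
  obtain ⟨p, hp⟩ := hu
  obtain ⟨q, hq⟩ := hw
  refine ⟨p.reverse.append q, fun x hx => ?_⟩
  rw [mem_support_append_iff, support_reverse, List.mem_reverse] at hx
  rcases hx with hx | hx
  exacts [mem_componentIn_of_mem_support hp hx, mem_componentIn_of_mem_support hq hx]

lemma nbhd_componentIn_subset : nbhd G (componentIn G D t) ⊆ Dᶜ := by
  rintro b ⟨hb, z, ⟨p, hp⟩, hzb⟩ hbD
  refine hb ⟨p.concat hzb, fun x hx => ?_⟩
  rw [support_concat, List.mem_append, List.mem_singleton] at hx
  rcases hx with hx | rfl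
  exacts [hp x hx, hbD]

lemma nbhd_componentIn_compl_subset : nbhd G (componentIn G Cᶜ x) ⊆ C :=
  fun _ hq => by simpa using nbhd_componentIn_subset hq

lemma isClique_nbhd_componentIn (hC : MConvex G C) (t : V) :
    G.IsClique (nbhd G (componentIn G Cᶜ t)) := by
  intro q₁ hq₁ q₂ hq₂ hne
  have hC₁ : q₁ ∈ C := nbhd_componentIn_compl_subset hq₁
  have hC₂ : q₂ ∈ C := nbhd_componentIn_compl_subset hq₂
  obtain ⟨-, s₁, hs₁, hsq₁⟩ := hq₁
  obtain ⟨-, s₂, hs₂, hsq₂⟩ := hq₂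
  obtain ⟨r, hr⟩ := exists_walk_of_mem_componentIn hs₁ hs₂
  obtain ⟨p, hp, hc, hsub⟩ :=
    exists_isPath_isChordless_support_subset (cons hsq₁.symm (r.concat hsq₂))
  have hnil : ¬ p.Nil := fun h => hne (h.eq)
  have hsnd := p.getVert_mem_support 1
  have hsndC : p.snd ∈ C := hC.support_subset hp hc hC₁ hC₂ _ hsnd
  have := hsub hsnd
  rw [support_cons, support_concat, List.mem_cons, List.mem_append, List.mem_singleton] at this
  rcases this with h | h | h
  · exact absurd h.symm (p.adj_snd hnil).ne
  · exact absurd hsndC (componentIn_subset (hr _ h))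
  · exact h ▸ p.adj_snd hnil

lemma support_subset_union_componentIn (hC : MConvex G C) {p : G.Walk u v} (hp : p.IsPath)
    (hc : p.IsChordless) (hu : u ∈ C ∪ componentIn G Cᶜ x) (hv : v ∈ C ∪ componentIn G Cᶜ x) :
    ∀ t ∈ p.support, t ∈ C ∪ componentIn G Cᶜ x := by
  intro t ht
  by_contra h
  rw [Set.mem_union, not_or] at h
  have hend : ∀ e ∈ C ∪ componentIn G Cᶜ x, e ∉ componentIn G Cᶜ t := by
    rintro e (he | he) het
    · exact componentIn_subset het he
    · exact h.2 (mem_componentIn_trans he (mem_componentIn_comm het))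
  exact notMem_of_isClique_nbhd hp hc (hend u hu) (hend v hv)
    ((isClique_nbhd_componentIn hC t).subset Set.inter_subset_left) ht (mem_componentIn_self h.1)

lemma mConvex_componentIn_union_nbhd (hC : MConvex G C) (x : V) :
    MConvex G (componentIn G Cᶜ x ∪ nbhd G (componentIn G Cᶜ x)) := by
  set S := componentIn G Cᶜ x
  have hQC : nbhd G S ⊆ C := nbhd_componentIn_compl_subset
  have hSC : ∀ s ∈ S, s ∉ C := fun s hs => componentIn_subset hs
  intro a ha b hb t ht
  obtain ⟨p, hp, hc, ht⟩ := mem_mInterval_iff.1 ht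
  have hends : ∀ e ∈ S ∪ nbhd G S, e ∈ C ∪ S ∧ e ∉ C \ nbhd G S := by
    rintro e (he | he)
    · exact ⟨.inr he, fun h => hSC e he h.1⟩
    · exact ⟨.inl (hQC he), fun h => h.2 he⟩
  have hsup := support_subset_union_componentIn hC hp hc (hends a ha).1 (hends b hb).1
  rcases hsup t ht with htC | htS
  · refine .inr (not_not.1 fun htQ => notMem_of_isClique_nbhd hp hc (hends a ha).2
      (hends b hb).2 ((isClique_nbhd_componentIn hC x).subset ?_) ht ⟨htC, htQ⟩)
    rintro y ⟨⟨hy, z, hz, hzy⟩, hyp⟩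
    rcases hsup y hyp with hyC | hyS
    · exact not_not.1 fun hyQ => hy ⟨hyC, hyQ⟩
    · exact absurd ⟨fun hzS => hSC z hzS hz.1, y, hyS, hzy.symm⟩ hz.2
  · exact .inl htS

lemma mHull_insert_subset (hC : MConvex G C) (hx : x ∉ C) :
    mHull G (insert x (nbhd G (componentIn G Cᶜ x))) ⊆
      componentIn G Cᶜ x ∪ nbhd G (componentIn G Cᶜ x) :=
  mHull_subset (Set.insert_subset (.inl (mem_componentIn_self hx)) Set.subset_union_right)
    (mConvex_componentIn_union_nbhd hC x)

lemma mConvex_union_mHull_insert (hC : MConvex G C) (hx : x ∉ C) :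
    MConvex G (C ∪ mHull G (insert x (nbhd G (componentIn G Cᶜ x)))) := by
  set S := componentIn G Cᶜ x
  have hQC : nbhd G S ⊆ C := nbhd_componentIn_compl_subset
  have hSC : ∀ s ∈ S, s ∉ C := fun s hs => componentIn_subset hs
  refine hC.union (mConvex_mHull G _) fun a ha b hb t ht => ?_
  rcases mHull_insert_subset hC hx hb with hbS | hbQ
  swap
  · exact .inl (hC a ha b (hQC hbQ) ht)
  obtain ⟨p, hp, hc, ht⟩ := mem_mInterval_iff.1 ht
  have hsup := support_subset_union_componentIn hC hp hc (.inl ha) (.inr hbS)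
  obtain ⟨d, hd, hdC, hdC'⟩ := p.exists_boundary_dart C ha (hSC b hbS)
  have hcp := p.dart_fst_mem_support_of_mem_darts hd
  have hcQ : d.fst ∈ nbhd G S := ⟨fun h => hSC _ h hdC, d.snd,
    (hsup _ (p.dart_snd_mem_support_of_mem_darts hd)).resolve_left hdC', d.adj.symm⟩
  rw [← p.take_spec hcp] at hp hc ht
  rcases (mem_support_append_iff _ _).1 ht with ht | ht
  · refine .inl (not_not.1 fun htC => notMem_of_isClique_nbhd hp.of_append_left
      (hc.of_append_left hp) (fun h => hSC a h ha) hcQ.1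
      ((isClique_nbhd_componentIn hC x).subset Set.inter_subset_left) ht ?_)
    exact (hsup t (p.support_takeUntil_subset_support _ ht)).resolve_left htC
  · exact .inr (mConvex_mHull G _ _ (subset_mHull G _ (.inr hcQ)) b hb
      (mem_mInterval_iff.2 ⟨_, hp.of_append_right, hc.of_append_right hp, ht⟩))

/-- `Z`, the component of `q` in `C` with the rest of `Q` removed, meets `Y`, since otherwise
`C \ Z` would be a convex set containing `Y`. A chordless path from `x` to `Z` inside `S ∪ Z`
leaves `S` through a vertex of `Q ∩ Z = {q}`. -/
lemma exists_mem_mInterval_of_mem_nbhd {q : V} (hx : x ∉ mHull G Y)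
    (hq : q ∈ nbhd G (componentIn G (mHull G Y)ᶜ x)) : ∃ y ∈ Y, q ∈ mInterval G x y := by
  set C := mHull G Y
  set S := componentIn G Cᶜ x
  set Z := componentIn G (C \ (nbhd G S \ {q})) q
  have hqC : q ∈ C := nbhd_componentIn_compl_subset hq
  have hqZ : q ∈ Z := mem_componentIn_self ⟨hqC, fun h => h.2 rfl⟩
  obtain ⟨y, hyY, hyZ⟩ : ∃ y ∈ Y, y ∈ Z := by
    by_contra! h
    suffices MConvex G (C \ Z) from
      (mHull_subset (fun y hy => Set.mem_sdiff_of_mem (subset_mHull G Y hy) (h y hy)) this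
        hqC).2 hqZ
    intro a ha b hb t ht
    obtain ⟨p, hp, hc, ht⟩ := mem_mInterval_iff.1 ht
    have hsup := (mConvex_mHull G Y).support_subset hp hc ha.1 hb.1
    refine ⟨hsup t ht, notMem_of_isClique_nbhd hp hc ha.2 hb.2
      ((isClique_nbhd_componentIn (mConvex_mHull G Y) x).subset ?_) ht⟩
    rintro z ⟨hz, hzp⟩
    by_contra hzQ
    exact nbhd_componentIn_subset hz ⟨hsup z hzp, fun h => hzQ h.1⟩
  have hyS : y ∉ S := fun h => componentIn_subset h (componentIn_subset hyZ).1
  obtain ⟨-, s, ⟨w₁, hw₁⟩, hsq⟩ := hq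
  obtain ⟨w₂, hw₂⟩ := hyZ
  obtain ⟨p, hp, hc, hsub⟩ :=
    exists_isPath_isChordless_support_subset ((w₁.concat hsq).append w₂)
  have hsup : ∀ z ∈ p.support, z ∈ S ∪ Z := by
    intro z hz
    have := hsub hz
    rw [mem_support_append_iff, support_concat, List.mem_append, List.mem_singleton] at this
    rcases this with (h | rfl) | h
    · exact .inl (mem_componentIn_of_mem_support hw₁ h)
    · exact .inr hqZ
    · exact .inr (mem_componentIn_of_mem_support hw₂ h)
  obtain ⟨d, hd, hdS, hdS'⟩ := p.exists_boundary_dart S (mem_componentIn_self hx) hyS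
  have hdZ : d.snd ∈ Z := (hsup _ (p.dart_snd_mem_support_of_mem_darts hd)).resolve_left hdS'
  have hdq : d.snd = q := by
    by_contra hne
    exact (componentIn_subset hdZ).2 ⟨⟨hdS', d.fst, hdS, d.adj⟩, hne⟩
  exact ⟨y, hyY, mem_mInterval_iff.2 ⟨p, hp, hc, hdq ▸ p.dart_snd_mem_support_of_mem_darts hd⟩⟩

lemma mHull_pair_subset_of_mem {y z : V} (hz : z ∈ mHull G {x, y}) :
    mHull G {x, z} ⊆ mHull G {x, y} :=
  mHull_subset_mHull (Set.insert_subset (subset_mHull G _ (by simp)) (by simpa))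

lemma exists_mem_mHull_pair_of_mem_insert {α β : V} (hx : x ∉ mHull G Y) (hv : v ∉ mHull G Y)
    (hα : α ∈ insert x (nbhd G (componentIn G (mHull G Y)ᶜ x)))
    (hβ : β ∈ insert x (nbhd G (componentIn G (mHull G Y)ᶜ x)))
    (hvαβ : v ∈ mHull G {α, β}) : ∃ y ∈ insert x Y, v ∈ mHull G {x, y} := by
  have hQC : nbhd G (componentIn G (mHull G Y)ᶜ x) ⊆ mHull G Y := nbhd_componentIn_compl_subset
  have hpair : ∀ z ∈ nbhd G (componentIn G (mHull G Y)ᶜ x), ∃ y ∈ Y, z ∈ mHull G {x, y} := by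
    intro z hz
    obtain ⟨y, hy, hzy⟩ := exists_mem_mInterval_of_mem_nbhd hx hz
    exact ⟨y, hy, mConvex_mHull G _ x (subset_mHull G _ (by simp)) y
      (subset_mHull G _ (by simp)) hzy⟩
  rcases hα with rfl | hαQ
  · rcases hβ with rfl | hβQ
    · exact ⟨_, Set.mem_insert _ Y, hvαβ⟩
    · obtain ⟨y, hy, hβy⟩ := hpair β hβQ
      exact ⟨y, .inr hy, mHull_pair_subset_of_mem hβy hvαβ⟩
  rcases hβ with rfl | hβQ
  · obtain ⟨y, hy, hαy⟩ := hpair α hαQ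
    exact ⟨y, .inr hy, mHull_pair_subset_of_mem hαy (Set.pair_comm α β ▸ hvαβ)⟩
  · exact absurd (mHull_subset (Set.insert_subset (hQC hαQ) (by simpa using hQC hβQ))
      (mConvex_mHull G Y) hvαβ) hv

lemma exists_pair_of_minimal (hY : Minimal (fun Y => v ∈ mHull G Y) Y)
    (ih : ∀ Z, mHull G Z ⊂ mHull G Y → v ∈ mHull G Z → ∃ a ∈ Z, ∃ b ∈ Z, v ∈ mHull G {a, b}) :
    ∃ a ∈ Y, ∃ b ∈ Y, v ∈ mHull G {a, b} := by
  by_cases hvY : v ∈ Y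
  · exact ⟨v, hvY, v, hvY, subset_mHull G _ (by simp)⟩
  obtain ⟨a, ha, b, hb, hab, hnadj⟩ : ∃ a ∈ Y, ∃ b ∈ Y, a ≠ b ∧ ¬ G.Adj a b := by
    by_contra! h
    exact hvY (mHull_subset subset_rfl (mConvex_of_isClique fun a ha b hb => h a ha b hb)
      hY.prop)
  by_cases hYab : Y ⊆ {a, b}
  · exact ⟨a, ha, b, hb, mHull_mono hYab hY.prop⟩
  obtain ⟨x, hxY, hxab⟩ := Set.not_subset.1 hYab
  set C := mHull G (Y \ {x})
  set S := componentIn G Cᶜ x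
  have hvC : v ∉ C := hY.not_prop_of_ssubset (Set.sdiff_singleton_ssubset.2 hxY)
  have hYC : Y ⊆ insert x C := fun y hy =>
    (eq_or_ne y x).imp id fun hyx => subset_mHull G _ ⟨hy, hyx⟩
  have hxC : x ∉ C := fun h =>
    hvC (mHull_subset (hYC.trans (Set.insert_subset h subset_rfl)) (mConvex_mHull G _) hY.prop)
  have hvW : v ∈ mHull G (insert x (nbhd G S)) :=
    (mHull_subset (hYC.trans (Set.insert_subset (.inr (subset_mHull G _ (.inl rfl)))
      Set.subset_union_left)) (mConvex_union_mHull_insert (mConvex_mHull G _) hxC)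
      hY.prop).resolve_left hvC
  have hQC : nbhd G S ⊆ C := nbhd_componentIn_compl_subset
  obtain ⟨c, hcY, hcQ⟩ : ∃ c ∈ Y \ {x}, c ∉ nbhd G S := by
    by_contra! h
    exact hnadj (isClique_nbhd_componentIn (mConvex_mHull G _) x
      (h a ⟨ha, fun h => hxab (.inl h.symm)⟩) (h b ⟨hb, fun h => hxab (.inr h.symm)⟩) hab)
  have hWY : mHull G (insert x (nbhd G S)) ⊂ mHull G Y := by
    refine ⟨mHull_subset_mHull (Set.insert_subset (subset_mHull G Y hxY)
      (hQC.trans (mHull_mono Set.sdiff_subset))), fun h => ?_⟩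
    rcases mHull_insert_subset (mConvex_mHull G _) hxC (h (subset_mHull G Y hcY.1))
      with hcS | hc
    exacts [componentIn_subset hcS (subset_mHull G _ hcY), hcQ hc]
  obtain ⟨α, hα, β, hβ, hvαβ⟩ := ih _ hWY hvW
  obtain ⟨y, hy, hvy⟩ := exists_mem_mHull_pair_of_mem_insert hxC hvC hα hβ hvαβ
  exact ⟨x, hxY, y, (Set.insert_subset hxY Set.sdiff_subset) hy, hvy⟩

theorem exists_pair_of_mem_mHull [Finite V] (hv : v ∈ mHull G X) :
    ∃ a ∈ X, ∃ b ∈ X, v ∈ mHull G {a, b} := by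
  induction hn : (mHull G X).ncard using Nat.strong_induction_on generalizing X with
  | _ n ih =>
  obtain ⟨Y, hYX, hY⟩ := exists_minimal_le_of_wellFoundedLT (fun Y => v ∈ mHull G Y) X hv
  obtain ⟨a, ha, b, hb, h⟩ := exists_pair_of_minimal hY fun Z hZ hvZ =>
    ih _ (hn ▸ (Set.ncard_lt_ncard hZ).trans_le (Set.ncard_le_ncard (mHull_mono hYX))) hvZ rfl
  exact ⟨a, hYX ha, b, hYX hb, h⟩

end Paper

theorem stmt_7_general [Fintype V] (G : SimpleGraph V)
    (X : Set V) (v : V) (hv : v ∈ mHull G X) :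
    ∃ Y ⊆ X, Y.ncard ≤ 2 ∧ v ∈ mHull G Y := by
  obtain ⟨a, ha, b, hb, h⟩ := exists_pair_of_mem_mHull hv
  refine ⟨{a, b}, Set.insert_subset ha (Set.singleton_subset_iff.2 hb), ?_, h⟩
  exact (Set.ncard_insert_le a {b}).trans (by rw [Set.ncard_singleton])

theorem stmt_7 [Fintype V] (G : SimpleGraph V) (hG : G.Connected)
    (hnc : ¬ ∀ u v : V, u ≠ v → G.Adj u v)
    (X : Set V) (v : V) (hv : v ∈ mHull G X) :
    ∃ Y ⊆ X, Y.ncard ≤ 2 ∧ v ∈ mHull G Y :=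
  stmt_7_general G X v hv
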